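/- arXiv:math/0407486 — 4 statements merged into one kernel-verified Lean document; each statement's English description precedes it below -/
import Mathlib

section
/- Let u be a smooth strictly convex function satisfying Abreu's equation S(u) = A with A constant on an open set in ℝ². Define w^i = -Σ_j ∂_j(u^{ij}) - (A/2)x^i and suppose H is a smooth function with w^i = Σ_j ε^{ij} H_j where ε is the standard antisymmetric symbol with ε^{12}=1. Then H satisfies Q(H) = Σ_{i,j} U^{ij} H_{ij} = 0, where U^{ij} is the cofactor matrix of the Hessian of u. -/
open Matrix BigOperators

/-- Partial derivative in the `i`-th coordinate direction. -/
noncomputable def pd {n : ℕ} (i : Fin n) (f : (Fin n → ℝ) → ℝ) : (Fin n → ℝ) → ℝ :=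
  fun x => fderiv ℝ f x (Pi.single i 1)

/-- Hessian matrix of second partial derivatives. -/
noncomputable def hess {n : ℕ} (u : (Fin n → ℝ) → ℝ) (x : Fin n → ℝ) :
    Matrix (Fin n) (Fin n) ℝ :=
  Matrix.of fun i j => pd i (pd j u) x

section aux
variable {n : ℕ} {Ω : Set (Fin n → ℝ)} {f g : (Fin n → ℝ) → ℝ} {x : Fin n → ℝ}

lemma pd_congrOn (hΩ : IsOpen Ω) (h : ∀ y ∈ Ω, f y = g y) (hx : x ∈ Ω) (i : Fin n) :
    pd i f x = pd i g x := by
  unfold pd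
  rw [Filter.EventuallyEq.fderiv_eq (Filter.eventuallyEq_of_mem (hΩ.mem_nhds hx) h)]

lemma diffAt (hΩ : IsOpen Ω) (hf : ContDiffOn ℝ (⊤ : ℕ∞) f Ω) (hx : x ∈ Ω) :
    DifferentiableAt ℝ f x :=
  (hf.differentiableOn (by norm_num)).differentiableAt (hΩ.mem_nhds hx)

lemma contDiffOn_pd (hΩ : IsOpen Ω) (hf : ContDiffOn ℝ (⊤ : ℕ∞) f Ω) (i : Fin n) :
    ContDiffOn ℝ (⊤ : ℕ∞) (pd i f) Ω :=
  (hf.fderiv_of_isOpen hΩ (by simp)).clm_apply contDiffOn_const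

lemma pd_addv (i : Fin n) (hf : DifferentiableAt ℝ f x) (hg : DifferentiableAt ℝ g x) :
    pd i (fun y => f y + g y) x = pd i f x + pd i g x := by
  simp [pd, fderiv_fun_add hf hg]

lemma pd_subv (i : Fin n) (hf : DifferentiableAt ℝ f x) (hg : DifferentiableAt ℝ g x) :
    pd i (fun y => f y - g y) x = pd i f x - pd i g x := by
  simp [pd, fderiv_fun_sub hf hg]

lemma pd_mulv (i : Fin n) (hf : DifferentiableAt ℝ f x) (hg : DifferentiableAt ℝ g x) :
    pd i (fun y => f y * g y) x = f x * pd i g x + g x * pd i f x := by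
  simp [pd, fderiv_fun_mul hf hg]

lemma pd_negv (i : Fin n) (f : (Fin n → ℝ) → ℝ) :
    pd i (fun y => -f y) = fun x => -pd i f x := by
  funext x; simp [pd, fderiv_neg]

lemma pd_comm (hΩ : IsOpen Ω) (hf : ContDiffOn ℝ (⊤ : ℕ∞) f Ω) (hx : x ∈ Ω) (i j : Fin n) :
    pd i (pd j f) x = pd j (pd i f) x := by
  have hca : ContDiffAt ℝ (⊤ : ℕ∞) f x := hf.contDiffAt (hΩ.mem_nhds hx)
  have hdf : DifferentiableAt ℝ (fderiv ℝ f) x :=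
    (hca.fderiv_right (m := 1) (WithTop.coe_le_coe.mpr le_top)).differentiableAt one_ne_zero
  have hsym := hca.isSymmSndFDerivAt (by
    rw [minSmoothness_of_isRCLikeNormedField]; exact WithTop.coe_le_coe.mpr le_top)
  have key : ∀ v w : Fin n → ℝ,
      fderiv ℝ (fun y => fderiv ℝ f y w) x v = fderiv ℝ (fderiv ℝ f) x v w := by
    intro v w
    rw [fderiv_clm_apply hdf (differentiableAt_const w)]
    simp
  show fderiv ℝ (fun y => fderiv ℝ f y (Pi.single j 1)) x (Pi.single i 1) = _
  rw [key, hsym]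
  exact (key _ _).symm

lemma diff_coord (j : Fin n) (x : Fin n → ℝ) :
    DifferentiableAt ℝ (fun y : Fin n → ℝ => y j) x :=
  (ContinuousLinearMap.proj (R := ℝ) (φ := fun _ : Fin n => ℝ) j).differentiableAt

lemma pd_coordv (i j : Fin n) (x : Fin n → ℝ) :
    pd i (fun y => y j) x = if i = j then 1 else 0 := by
  have h : (fun y : Fin n → ℝ => y j)
      = (ContinuousLinearMap.proj (R := ℝ) (φ := fun _ : Fin n => ℝ) j :
          (Fin n → ℝ) →L[ℝ] ℝ) := rfl
  unfold pd
  rw [h, ContinuousLinearMap.fderiv]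
  rcases eq_or_ne i j with he | he
  · simp [he]
  · simp [Pi.single_apply, he, he.symm]

lemma pd_cmul_coordv (i j : Fin n) (r : ℝ) (x : Fin n → ℝ) :
    pd i (fun y => r * y j) x = r * (if i = j then 1 else 0) := by
  have h : pd i (fun y => r * y j) x = r * pd i (fun y => y j) x := by
    simp [pd, fderiv_const_mul (diff_coord j x) r]
  rw [h, pd_coordv]

lemma pd_hamneg (hΩ : IsOpen Ω) {F G Hf : (Fin n → ℝ) → ℝ} (hx : x ∈ Ω)
    (hF : ContDiffOn ℝ (⊤ : ℕ∞) F Ω) (hG : ContDiffOn ℝ (⊤ : ℕ∞) G Ω) (r : ℝ) (j : Fin n)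
    (h : ∀ y ∈ Ω, Hf y = -F y - G y - r * y j) (k : Fin n) :
    pd k Hf x = -pd k F x - pd k G x - r * (if k = j then 1 else 0) := by
  rw [pd_congrOn hΩ h hx k,
    pd_subv k ((diffAt hΩ hF hx).fun_neg.fun_sub (diffAt hΩ hG hx)) ((diff_coord j x).const_mul r),
    pd_subv k (diffAt hΩ hF hx).fun_neg (diffAt hΩ hG hx), pd_cmul_coordv, pd_negv]

lemma pd_hampos (hΩ : IsOpen Ω) {F G Hf : (Fin n → ℝ) → ℝ} (hx : x ∈ Ω)
    (hF : ContDiffOn ℝ (⊤ : ℕ∞) F Ω) (hG : ContDiffOn ℝ (⊤ : ℕ∞) G Ω) (r : ℝ) (j : Fin n)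
    (h : ∀ y ∈ Ω, Hf y = F y + G y + r * y j) (k : Fin n) :
    pd k Hf x = pd k F x + pd k G x + r * (if k = j then 1 else 0) := by
  rw [pd_congrOn hΩ h hx k,
    pd_addv k ((diffAt hΩ hF hx).fun_add (diffAt hΩ hG hx)) ((diff_coord j x).const_mul r),
    pd_addv k (diffAt hΩ hF hx) (diffAt hΩ hG hx), pd_cmul_coordv]

end aux

set_option maxHeartbeats 4000000 in
/-- in dimension 2, the Hamiltonian H of w satisfies Q(H) = 0. -/
theorem stmt_6 (Ω : Set (Fin 2 → ℝ)) (hΩ : IsOpen Ω)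
    (u : (Fin 2 → ℝ) → ℝ) (hu : ContDiffOn ℝ (⊤ : ℕ∞) u Ω)
    (hpos : ∀ x ∈ Ω, (hess u x).PosDef) (A : ℝ)
    (habreu : ∀ x ∈ Ω,
      -∑ i, ∑ j, pd i (pd j (fun y => (hess u y)⁻¹ i j)) x = A)
    (H : (Fin 2 → ℝ) → ℝ) (hH : ContDiffOn ℝ (⊤ : ℕ∞) H Ω)
    (hHam : ∀ x ∈ Ω, ∀ i,
      (-∑ j, pd j (fun y => (hess u y)⁻¹ i j) x) - (A / 2) * x i
        = ∑ j, (!![(0:ℝ), 1; -1, 0]) i j * pd j H x) :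
    ∀ x ∈ Ω,
      ∑ i, ∑ j, (hess u x).det * (hess u x)⁻¹ i j * pd i (pd j H) x = 0 := by
  intro x hx
  have hsu : ∀ i j : Fin 2, ContDiffOn ℝ (⊤ : ℕ∞) (pd i (pd j u)) Ω :=
    fun i j => contDiffOn_pd hΩ (contDiffOn_pd hΩ hu j) i
  have hbb' : ∀ y ∈ Ω, pd 1 (pd 0 u) y = pd 0 (pd 1 u) y :=
    fun y hy => pd_comm hΩ hu hy 1 0
  have hhess : ∀ y ∈ Ω, hess u y =
      !![pd 0 (pd 0 u) y, pd 0 (pd 1 u) y; pd 0 (pd 1 u) y, pd 1 (pd 1 u) y] := by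
    intro y hy
    ext i j
    fin_cases i <;> fin_cases j <;> simp [hess]
    exact hbb' y hy
  set a := pd 0 (pd 0 u) with ha_def
  set b := pd 0 (pd 1 u) with hb_def
  set c := pd 1 (pd 1 u) with hc_def
  have haC : ContDiffOn ℝ (⊤ : ℕ∞) a Ω := by rw [ha_def]; exact hsu 0 0
  have hbC : ContDiffOn ℝ (⊤ : ℕ∞) b Ω := by rw [hb_def]; exact hsu 0 1
  have hcC : ContDiffOn ℝ (⊤ : ℕ∞) c Ω := by rw [hc_def]; exact hsu 1 1
  have hdC : ContDiffOn ℝ (⊤ : ℕ∞) (fun z => a z * c z - b z * b z) Ω :=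
    (haC.mul hcC).sub (hbC.mul hbC)
  have hdet : ∀ y ∈ Ω, (hess u y).det = a y * c y - b y * b y := by
    intro y hy
    rw [hhess y hy, Matrix.det_fin_two_of]
  have hdpos : ∀ y ∈ Ω, 0 < a y * c y - b y * b y := by
    intro y hy; rw [← hdet y hy]; exact (hpos y hy).det_pos
  have hdne : ∀ y ∈ Ω, a y * c y - b y * b y ≠ 0 := fun y hy => ne_of_gt (hdpos y hy)
  have hinv : ∀ y ∈ Ω, (hess u y)⁻¹ =
      (a y * c y - b y * b y)⁻¹ • !![c y, -b y; -b y, a y] := by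
    intro y hy
    rw [hhess y hy, Matrix.inv_def, Matrix.adjugate_fin_two_of, Matrix.det_fin_two_of,
      Ring.inverse_eq_inv']
  set G00 : (Fin 2 → ℝ) → ℝ := fun y => (hess u y)⁻¹ 0 0 with hG00_def
  set G01 : (Fin 2 → ℝ) → ℝ := fun y => (hess u y)⁻¹ 0 1 with hG01_def
  set G10 : (Fin 2 → ℝ) → ℝ := fun y => (hess u y)⁻¹ 1 0 with hG10_def
  set G11 : (Fin 2 → ℝ) → ℝ := fun y => (hess u y)⁻¹ 1 1 with hG11_def
  have hg00f : ∀ y ∈ Ω, G00 y = c y / (a y * c y - b y * b y) := by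
    intro y hy
    show (hess u y)⁻¹ 0 0 = _
    rw [hinv y hy]
    simp [Matrix.smul_apply, inv_mul_eq_div, neg_div]
  have hg01f : ∀ y ∈ Ω, G01 y = -b y / (a y * c y - b y * b y) := by
    intro y hy
    show (hess u y)⁻¹ 0 1 = _
    rw [hinv y hy]
    simp [Matrix.smul_apply, inv_mul_eq_div, neg_div]
  have hg10f : ∀ y ∈ Ω, G10 y = -b y / (a y * c y - b y * b y) := by
    intro y hy
    show (hess u y)⁻¹ 1 0 = _
    rw [hinv y hy]
    simp [Matrix.smul_apply, inv_mul_eq_div, neg_div]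
  have hg11f : ∀ y ∈ Ω, G11 y = a y / (a y * c y - b y * b y) := by
    intro y hy
    show (hess u y)⁻¹ 1 1 = _
    rw [hinv y hy]
    simp [Matrix.smul_apply, inv_mul_eq_div, neg_div]
  have hP00 : ∀ y ∈ Ω, (a y * c y - b y * b y) * G00 y = c y := by
    intro y hy; rw [hg00f y hy, mul_comm, div_mul_cancel₀ _ (hdne y hy)]
  have hP01 : ∀ y ∈ Ω, (a y * c y - b y * b y) * G01 y = -b y := by
    intro y hy; rw [hg01f y hy, mul_comm, div_mul_cancel₀ _ (hdne y hy)]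
  have hP10 : ∀ y ∈ Ω, (a y * c y - b y * b y) * G10 y = -b y := by
    intro y hy; rw [hg10f y hy, mul_comm, div_mul_cancel₀ _ (hdne y hy)]
  have hP11 : ∀ y ∈ Ω, (a y * c y - b y * b y) * G11 y = a y := by
    intro y hy; rw [hg11f y hy, mul_comm, div_mul_cancel₀ _ (hdne y hy)]
  have hsG00 : ContDiffOn ℝ (⊤ : ℕ∞) G00 Ω :=
    (hcC.div hdC hdne).congr (fun y hy => by rw [hg00f y hy]; rfl)
  have hsG01 : ContDiffOn ℝ (⊤ : ℕ∞) G01 Ω :=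
    ((hbC.neg).div hdC hdne).congr (fun y hy => by rw [hg01f y hy]; rfl)
  have hsG10 : ContDiffOn ℝ (⊤ : ℕ∞) G10 Ω :=
    ((hbC.neg).div hdC hdne).congr (fun y hy => by rw [hg10f y hy]; rfl)
  have hsG11 : ContDiffOn ℝ (⊤ : ℕ∞) G11 Ω :=
    (haC.div hdC hdne).congr (fun y hy => by rw [hg11f y hy]; rfl)
  have DA : ∀ y ∈ Ω, DifferentiableAt ℝ a y := fun y hy => diffAt hΩ haC hy
  have DB : ∀ y ∈ Ω, DifferentiableAt ℝ b y := fun y hy => diffAt hΩ hbC hy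
  have DC : ∀ y ∈ Ω, DifferentiableAt ℝ c y := fun y hy => diffAt hΩ hcC hy
  have DD : ∀ y ∈ Ω, DifferentiableAt ℝ (fun z => a z * c z - b z * b z) y :=
    fun y hy => diffAt hΩ hdC hy
  have DpA : ∀ (l : Fin 2), ∀ y ∈ Ω, DifferentiableAt ℝ (pd l a) y :=
    fun l y hy => diffAt hΩ (contDiffOn_pd hΩ haC l) hy
  have DpB : ∀ (l : Fin 2), ∀ y ∈ Ω, DifferentiableAt ℝ (pd l b) y :=
    fun l y hy => diffAt hΩ (contDiffOn_pd hΩ hbC l) hy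
  have DpC : ∀ (l : Fin 2), ∀ y ∈ Ω, DifferentiableAt ℝ (pd l c) y :=
    fun l y hy => diffAt hΩ (contDiffOn_pd hΩ hcC l) hy
  have DpD : ∀ (l : Fin 2), ∀ y ∈ Ω,
      DifferentiableAt ℝ (pd l (fun z => a z * c z - b z * b z)) y :=
    fun l y hy => diffAt hΩ (contDiffOn_pd hΩ hdC l) hy
  have DG00 : ∀ y ∈ Ω, DifferentiableAt ℝ G00 y := fun y hy => diffAt hΩ hsG00 hy
  have DG01 : ∀ y ∈ Ω, DifferentiableAt ℝ G01 y := fun y hy => diffAt hΩ hsG01 hy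
  have DG10 : ∀ y ∈ Ω, DifferentiableAt ℝ G10 y := fun y hy => diffAt hΩ hsG10 hy
  have DG11 : ∀ y ∈ Ω, DifferentiableAt ℝ G11 y := fun y hy => diffAt hΩ hsG11 hy
  have DpG00 : ∀ (l : Fin 2), ∀ y ∈ Ω, DifferentiableAt ℝ (pd l G00) y :=
    fun l y hy => diffAt hΩ (contDiffOn_pd hΩ hsG00 l) hy
  have DpG01 : ∀ (l : Fin 2), ∀ y ∈ Ω, DifferentiableAt ℝ (pd l G01) y :=
    fun l y hy => diffAt hΩ (contDiffOn_pd hΩ hsG01 l) hy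
  have DpG10 : ∀ (l : Fin 2), ∀ y ∈ Ω, DifferentiableAt ℝ (pd l G10) y :=
    fun l y hy => diffAt hΩ (contDiffOn_pd hΩ hsG10 l) hy
  have DpG11 : ∀ (l : Fin 2), ∀ y ∈ Ω, DifferentiableAt ℝ (pd l G11) y :=
    fun l y hy => diffAt hΩ (contDiffOn_pd hΩ hsG11 l) hy
  -- first derivatives of the determinant function
  have hpdd : ∀ (l : Fin 2), ∀ y ∈ Ω, pd l (fun z => a z * c z - b z * b z) y =
      (a y * pd l c y + c y * pd l a y) - (b y * pd l b y + b y * pd l b y) := by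
    intro l y hy
    rw [pd_subv l ((DA y hy).fun_mul (DC y hy)) ((DB y hy).fun_mul (DB y hy)),
      pd_mulv l (DA y hy) (DC y hy), pd_mulv l (DB y hy) (DB y hy)]
  have hpdd2 : ∀ k l : Fin 2, pd k (pd l (fun z => a z * c z - b z * b z)) x =
      (a x * pd k (pd l c) x + pd l c x * pd k a x
        + (c x * pd k (pd l a) x + pd l a x * pd k c x))
      - (b x * pd k (pd l b) x + pd l b x * pd k b x
        + (b x * pd k (pd l b) x + pd l b x * pd k b x)) := by
    intro k l
    rw [pd_congrOn hΩ
      (f := pd l (fun z => a z * c z - b z * b z))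
      (g := fun y => (a y * pd l c y + c y * pd l a y) - (b y * pd l b y + b y * pd l b y))
      (hpdd l) hx k,
      pd_subv k (((DA x hx).fun_mul (DpC l x hx)).fun_add ((DC x hx).fun_mul (DpA l x hx)))
        (((DB x hx).fun_mul (DpB l x hx)).fun_add ((DB x hx).fun_mul (DpB l x hx))),
      pd_addv k ((DA x hx).fun_mul (DpC l x hx)) ((DC x hx).fun_mul (DpA l x hx)),
      pd_addv k ((DB x hx).fun_mul (DpB l x hx)) ((DB x hx).fun_mul (DpB l x hx)),
      pd_mulv k (DA x hx) (DpC l x hx), pd_mulv k (DC x hx) (DpA l x hx),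
      pd_mulv k (DB x hx) (DpB l x hx)]
  -- first product relations differentiated once
  have hQ00 : ∀ (l : Fin 2), ∀ y ∈ Ω,
      (a y * c y - b y * b y) * pd l G00 y
        + G00 y * pd l (fun z => a z * c z - b z * b z) y = pd l c y := by
    intro l y hy
    have h1 := pd_congrOn hΩ (f := fun z => (a z * c z - b z * b z) * G00 z) (g := c)
      hP00 hy l
    rw [pd_mulv l (DD y hy) (DG00 y hy)] at h1
    exact h1
  have hQ01 : ∀ (l : Fin 2), ∀ y ∈ Ω,
      (a y * c y - b y * b y) * pd l G01 y
        + G01 y * pd l (fun z => a z * c z - b z * b z) y = -pd l b y := by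
    intro l y hy
    have h1 := pd_congrOn hΩ (f := fun z => (a z * c z - b z * b z) * G01 z)
      (g := fun z => -b z) hP01 hy l
    rw [pd_mulv l (DD y hy) (DG01 y hy), pd_negv] at h1
    exact h1
  have hQ10 : ∀ (l : Fin 2), ∀ y ∈ Ω,
      (a y * c y - b y * b y) * pd l G10 y
        + G10 y * pd l (fun z => a z * c z - b z * b z) y = -pd l b y := by
    intro l y hy
    have h1 := pd_congrOn hΩ (f := fun z => (a z * c z - b z * b z) * G10 z)
      (g := fun z => -b z) hP10 hy l
    rw [pd_mulv l (DD y hy) (DG10 y hy), pd_negv] at h1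
    exact h1
  have hQ11 : ∀ (l : Fin 2), ∀ y ∈ Ω,
      (a y * c y - b y * b y) * pd l G11 y
        + G11 y * pd l (fun z => a z * c z - b z * b z) y = pd l a y := by
    intro l y hy
    have h1 := pd_congrOn hΩ (f := fun z => (a z * c z - b z * b z) * G11 z) (g := a)
      hP11 hy l
    rw [pd_mulv l (DD y hy) (DG11 y hy)] at h1
    exact h1
  have hQ2_00 : ∀ k l : Fin 2,
      (a x * c x - b x * b x) * pd k (pd l G00) x
        + pd l G00 x * pd k (fun z => a z * c z - b z * b z) x
        + (G00 x * pd k (pd l (fun z => a z * c z - b z * b z)) x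
          + pd l (fun z => a z * c z - b z * b z) x * pd k G00 x) = pd k (pd l c) x := by
    intro k l
    have h1 := pd_congrOn hΩ
      (f := fun z => (a z * c z - b z * b z) * pd l G00 z
        + G00 z * pd l (fun w => a w * c w - b w * b w) z)
      (g := pd l c) (hQ00 l) hx k
    rw [pd_addv k ((DD x hx).fun_mul (DpG00 l x hx)) ((DG00 x hx).fun_mul (DpD l x hx)),
      pd_mulv k (DD x hx) (DpG00 l x hx), pd_mulv k (DG00 x hx) (DpD l x hx)] at h1
    linarith [h1]
  have hQ2_01 : ∀ k l : Fin 2,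
      (a x * c x - b x * b x) * pd k (pd l G01) x
        + pd l G01 x * pd k (fun z => a z * c z - b z * b z) x
        + (G01 x * pd k (pd l (fun z => a z * c z - b z * b z)) x
          + pd l (fun z => a z * c z - b z * b z) x * pd k G01 x) = -pd k (pd l b) x := by
    intro k l
    have h1 := pd_congrOn hΩ
      (f := fun z => (a z * c z - b z * b z) * pd l G01 z
        + G01 z * pd l (fun w => a w * c w - b w * b w) z)
      (g := fun z => -pd l b z) (hQ01 l) hx k
    rw [pd_addv k ((DD x hx).fun_mul (DpG01 l x hx)) ((DG01 x hx).fun_mul (DpD l x hx)),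
      pd_mulv k (DD x hx) (DpG01 l x hx), pd_mulv k (DG01 x hx) (DpD l x hx)] at h1
    simp only [pd_negv] at h1
    linarith [h1]
  have hQ2_10 : ∀ k l : Fin 2,
      (a x * c x - b x * b x) * pd k (pd l G10) x
        + pd l G10 x * pd k (fun z => a z * c z - b z * b z) x
        + (G10 x * pd k (pd l (fun z => a z * c z - b z * b z)) x
          + pd l (fun z => a z * c z - b z * b z) x * pd k G10 x) = -pd k (pd l b) x := by
    intro k l
    have h1 := pd_congrOn hΩ
      (f := fun z => (a z * c z - b z * b z) * pd l G10 z
        + G10 z * pd l (fun w => a w * c w - b w * b w) z)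
      (g := fun z => -pd l b z) (hQ10 l) hx k
    rw [pd_addv k ((DD x hx).fun_mul (DpG10 l x hx)) ((DG10 x hx).fun_mul (DpD l x hx)),
      pd_mulv k (DD x hx) (DpG10 l x hx), pd_mulv k (DG10 x hx) (DpD l x hx)] at h1
    simp only [pd_negv] at h1
    linarith [h1]
  have hQ2_11 : ∀ k l : Fin 2,
      (a x * c x - b x * b x) * pd k (pd l G11) x
        + pd l G11 x * pd k (fun z => a z * c z - b z * b z) x
        + (G11 x * pd k (pd l (fun z => a z * c z - b z * b z)) x
          + pd l (fun z => a z * c z - b z * b z) x * pd k G11 x) = pd k (pd l a) x := by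
    intro k l
    have h1 := pd_congrOn hΩ
      (f := fun z => (a z * c z - b z * b z) * pd l G11 z
        + G11 z * pd l (fun w => a w * c w - b w * b w) z)
      (g := pd l a) (hQ11 l) hx k
    rw [pd_addv k ((DD x hx).fun_mul (DpG11 l x hx)) ((DG11 x hx).fun_mul (DpD l x hx)),
      pd_mulv k (DD x hx) (DpG11 l x hx), pd_mulv k (DG11 x hx) (DpD l x hx)] at h1
    linarith [h1]
  have e0 : ∀ y ∈ Ω, pd 1 H y = -pd 0 G00 y - pd 1 G01 y - (A/2) * y 0 := by
    intro y hy
    have h := hHam y hy 0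
    rw [Fin.sum_univ_two, Fin.sum_univ_two] at h
    rw [← hG00_def, ← hG01_def] at h
    norm_num [Matrix.cons_val_zero, Matrix.cons_val_one, Matrix.head_cons] at h
    linarith [h]
  have e1 : ∀ y ∈ Ω, pd 0 H y = pd 0 G10 y + pd 1 G11 y + (A/2) * y 1 := by
    intro y hy
    have h := hHam y hy 1
    rw [Fin.sum_univ_two, Fin.sum_univ_two] at h
    rw [← hG10_def, ← hG11_def] at h
    norm_num [Matrix.cons_val_zero, Matrix.cons_val_one, Matrix.head_cons] at h
    linarith [h]
  have hh01 := pd_hamneg hΩ hx (contDiffOn_pd hΩ hsG00 0) (contDiffOn_pd hΩ hsG01 1)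
    (A/2) 0 e0 0
  have hh11 := pd_hamneg hΩ hx (contDiffOn_pd hΩ hsG00 0) (contDiffOn_pd hΩ hsG01 1)
    (A/2) 0 e0 1
  have hh00 := pd_hampos hΩ hx (contDiffOn_pd hΩ hsG10 0) (contDiffOn_pd hΩ hsG11 1)
    (A/2) 1 e1 0
  have hh10 := pd_hampos hΩ hx (contDiffOn_pd hΩ hsG10 0) (contDiffOn_pd hΩ hsG11 1)
    (A/2) 1 e1 1
  norm_num at hh01 hh11 hh00 hh10
  have EX00 : ∀ k l : Fin 2, pd k (pd l G00) x =
      (pd k (pd l c) x - pd l G00 x * pd k (fun z => a z * c z - b z * b z) x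
        - (G00 x * pd k (pd l (fun z => a z * c z - b z * b z)) x
          + pd l (fun z => a z * c z - b z * b z) x * pd k G00 x))
        / (a x * c x - b x * b x) := by
    intro k l
    rw [eq_div_iff (hdne x hx)]
    linear_combination hQ2_00 k l
  have EXf00 : ∀ l : Fin 2, pd l G00 x =
      (pd l c x - G00 x * pd l (fun z => a z * c z - b z * b z) x)
        / (a x * c x - b x * b x) := by
    intro l
    rw [eq_div_iff (hdne x hx)]
    linear_combination hQ00 l x hx
  have hv00 : G00 x = c x / (a x * c x - b x * b x) := hg00f x hx
  have EX01 : ∀ k l : Fin 2, pd k (pd l G01) x =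
      (-pd k (pd l b) x - pd l G01 x * pd k (fun z => a z * c z - b z * b z) x
        - (G01 x * pd k (pd l (fun z => a z * c z - b z * b z)) x
          + pd l (fun z => a z * c z - b z * b z) x * pd k G01 x))
        / (a x * c x - b x * b x) := by
    intro k l
    rw [eq_div_iff (hdne x hx)]
    linear_combination hQ2_01 k l
  have EXf01 : ∀ l : Fin 2, pd l G01 x =
      (-pd l b x - G01 x * pd l (fun z => a z * c z - b z * b z) x)
        / (a x * c x - b x * b x) := by
    intro l
    rw [eq_div_iff (hdne x hx)]
    linear_combination hQ01 l x hx
  have hv01 : G01 x = -b x / (a x * c x - b x * b x) := hg01f x hx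
  have EX10 : ∀ k l : Fin 2, pd k (pd l G10) x =
      (-pd k (pd l b) x - pd l G10 x * pd k (fun z => a z * c z - b z * b z) x
        - (G10 x * pd k (pd l (fun z => a z * c z - b z * b z)) x
          + pd l (fun z => a z * c z - b z * b z) x * pd k G10 x))
        / (a x * c x - b x * b x) := by
    intro k l
    rw [eq_div_iff (hdne x hx)]
    linear_combination hQ2_10 k l
  have EXf10 : ∀ l : Fin 2, pd l G10 x =
      (-pd l b x - G10 x * pd l (fun z => a z * c z - b z * b z) x)
        / (a x * c x - b x * b x) := by
    intro l
    rw [eq_div_iff (hdne x hx)]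
    linear_combination hQ10 l x hx
  have hv10 : G10 x = -b x / (a x * c x - b x * b x) := hg10f x hx
  have EX11 : ∀ k l : Fin 2, pd k (pd l G11) x =
      (pd k (pd l a) x - pd l G11 x * pd k (fun z => a z * c z - b z * b z) x
        - (G11 x * pd k (pd l (fun z => a z * c z - b z * b z)) x
          + pd l (fun z => a z * c z - b z * b z) x * pd k G11 x))
        / (a x * c x - b x * b x) := by
    intro k l
    rw [eq_div_iff (hdne x hx)]
    linear_combination hQ2_11 k l
  have EXf11 : ∀ l : Fin 2, pd l G11 x =
      (pd l a x - G11 x * pd l (fun z => a z * c z - b z * b z) x)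
        / (a x * c x - b x * b x) := by
    intro l
    rw [eq_div_iff (hdne x hx)]
    linear_combination hQ11 l x hx
  have hv11 : G11 x = a x / (a x * c x - b x * b x) := hg11f x hx
  have S1' : ∀ y ∈ Ω, pd 0 b y = pd 1 a y := by
    intro y hy
    have h1 := pd_congrOn hΩ (f := b) (g := pd 1 (pd 0 u))
      (fun z hz => (hbb' z hz).symm) hy 0
    have h2 : pd 0 (pd 1 (pd 0 u)) y = pd 1 a y := by
      rw [ha_def]; exact pd_comm hΩ (contDiffOn_pd hΩ hu 0) hy 0 1
    exact h1.trans h2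
  have S2' : ∀ y ∈ Ω, pd 0 c y = pd 1 b y := by
    intro y hy
    rw [hb_def, hc_def]; exact pd_comm hΩ (contDiffOn_pd hΩ hu 1) hy 0 1
  have T1 : ∀ k : Fin 2, pd k (pd 0 b) x = pd k (pd 1 a) x :=
    fun k => pd_congrOn hΩ (f := pd 0 b) (g := pd 1 a) S1' hx k
  have T2 : ∀ k : Fin 2, pd k (pd 0 c) x = pd k (pd 1 b) x :=
    fun k => pd_congrOn hΩ (f := pd 0 c) (g := pd 1 b) S2' hx k
  have U1 : pd 1 (pd 0 a) x = pd 0 (pd 1 a) x := pd_comm hΩ haC hx 1 0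
  have U2 : pd 0 (pd 1 b) x = pd 1 (pd 1 a) x := (pd_comm hΩ hbC hx 0 1).trans (T1 1)
  have U3 : pd 0 (pd 1 c) x = pd 1 (pd 1 b) x := (pd_comm hΩ hcC hx 0 1).trans (T2 1)
  simp only [Fin.sum_univ_two]
  rw [hdet x hx]
  have i00 : (hess u x)⁻¹ 0 0 = G00 x := by rw [hG00_def]
  have i01 : (hess u x)⁻¹ 0 1 = G01 x := by rw [hG01_def]
  have i10 : (hess u x)⁻¹ 1 0 = G10 x := by rw [hG10_def]
  have i11 : (hess u x)⁻¹ 1 1 = G11 x := by rw [hG11_def]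
  rw [i00, i01, i10, i11, hh00, hh01, hh10, hh11]
  rw [EX10 0 0, EX10 1 0, EX11 0 1, EX11 1 1, EX00 0 0, EX00 1 0, EX01 0 1, EX01 1 1]
  rw [EXf00 0, EXf00 1, EXf01 0, EXf01 1, EXf10 0, EXf10 1, EXf11 0, EXf11 1]
  rw [hv00, hv01, hv10, hv11]
  rw [hpdd2 0 0, hpdd2 0 1, hpdd2 1 0, hpdd2 1 1]
  rw [hpdd 0 x hx, hpdd 1 x hx]
  rw [T1 0, T1 1, T2 0, T2 1, U1, U2, U3, S1' x hx, S2' x hx]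
  have hD := hdne x hx
  clear_value a b c G00 G01 G10 G11
  generalize a x * c x - b x * b x = D at *
  field_simp
  ring
end

section
/- Let u be a smooth strictly convex function on a convex domain D ⊆ ℝⁿ whose gradient image (∇u)(D) is convex, and suppose the vector field v^i = Σ_j u^{ij} L_j (where L = log det(u_{ij})) satisfies |v| ≤ K on D. Then for any x, y in D, |L(x) − L(y)| ≤ K·|∇u(x) − ∇u(y)|. -/
open Matrix BigOperators Topology Filter

section aux
variable {n : ℕ} {D : Set (Fin n → ℝ)} {u : (Fin n → ℝ) → ℝ}

noncomputable def gradMap {n : ℕ} (u : (Fin n → ℝ) → ℝ) : (Fin n → ℝ) → (Fin n → ℝ) :=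
  fun x i => pd i u x

lemma contDiffAt_pd (hD : IsOpen D) (hu : ContDiffOn ℝ (⊤ : ℕ∞) u D) {x : Fin n → ℝ} (hx : x ∈ D)
    (i : Fin n) : ContDiffAt ℝ (⊤ : ℕ∞) (pd i u) x := by
  have h0 : ContDiffAt ℝ (⊤ : ℕ∞) u x := (hu.contDiffAt (hD.mem_nhds hx)).of_le (by simp)
  have h1 : ContDiffAt ℝ (⊤ : ℕ∞) (fderiv ℝ u) x := h0.fderiv_right (by simp)
  exact (ContinuousLinearMap.apply ℝ ℝ (Pi.single i 1 : Fin n → ℝ)).contDiff.comp_contDiffAt x h1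

lemma contDiffAt_pdpd (hD : IsOpen D) (hu : ContDiffOn ℝ (⊤ : ℕ∞) u D) {x : Fin n → ℝ} (hx : x ∈ D)
    (i j : Fin n) : ContDiffAt ℝ (⊤ : ℕ∞) (pd i (pd j u)) x := by
  have h1 : ContDiffAt ℝ (⊤ : ℕ∞) (fderiv ℝ (pd j u)) x :=
    (contDiffAt_pd hD hu hx j).fderiv_right (by simp)
  exact (ContinuousLinearMap.apply ℝ ℝ (Pi.single i 1 : Fin n → ℝ)).contDiff.comp_contDiffAt x h1

lemma contDiffAt_gradMap (hD : IsOpen D) (hu : ContDiffOn ℝ (⊤ : ℕ∞) u D) {x : Fin n → ℝ} (hx : x ∈ D) :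
    ContDiffAt ℝ (⊤ : ℕ∞) (gradMap u) x := by
  rw [contDiffAt_pi]
  intro i
  exact contDiffAt_pd hD hu hx i

/-- The continuous linear map given by the Hessian matrix. -/
noncomputable def Hclm {n : ℕ} (u : (Fin n → ℝ) → ℝ) (x : Fin n → ℝ) :
    (Fin n → ℝ) →L[ℝ] (Fin n → ℝ) :=
  LinearMap.toContinuousLinearMap (hess u x).mulVecLin

lemma hasFDerivAt_gradMap (hD : IsOpen D) (hu : ContDiffOn ℝ (⊤ : ℕ∞) u D) {x : Fin n → ℝ} (hx : x ∈ D)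
    (hsym : (hess u x).IsHermitian) :
    HasFDerivAt (gradMap u) (Hclm u x) x := by
  apply hasFDerivAt_pi''
  intro i
  have hdi : DifferentiableAt ℝ (pd i u) x :=
    (contDiffAt_pd hD hu hx i).differentiableAt (by simp)
  have : (ContinuousLinearMap.proj i).comp (Hclm u x) = fderiv ℝ (pd i u) x := by
    apply ContinuousLinearMap.coe_injective
    apply LinearMap.pi_ext'
    intro j
    apply LinearMap.ext_ring
    show (Hclm u x (Pi.single j 1)) i = fderiv ℝ (pd i u) x (Pi.single j 1)
    have h1 : (Hclm u x) (Pi.single j 1) = (hess u x) *ᵥ (Pi.single j 1) := rfl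
    rw [h1, Matrix.mulVec_single]
    have h2 : fderiv ℝ (pd i u) x (Pi.single j 1) = pd j (pd i u) x := rfl
    rw [h2]
    have := congrFun (congrFun hsym.eq i) j
    simp only [conjTranspose_apply, star_trivial] at this
    simpa [hess, mul_one] using this.symm
  rw [this]
  exact hdi.hasFDerivAt

lemma hasStrictFDerivAt_gradMap (hD : IsOpen D) (hu : ContDiffOn ℝ (⊤ : ℕ∞) u D) {x : Fin n → ℝ}
    (hx : x ∈ D) (hsym : (hess u x).IsHermitian) :
    HasStrictFDerivAt (gradMap u) (Hclm u x) x :=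
  (contDiffAt_gradMap hD hu hx).hasStrictFDerivAt' (hasFDerivAt_gradMap hD hu hx hsym)
    (by simp)

lemma clm_apply_eq_sum {n : ℕ} (φ : (Fin n → ℝ) →L[ℝ] ℝ) (z : Fin n → ℝ) :
    φ z = ∑ j, z j * φ (Pi.single j 1) := by
  have hz : z = ∑ j, z j • (Pi.single j 1 : Fin n → ℝ) := by
    conv_lhs => rw [pi_eq_sum_univ z]
    refine Finset.sum_congr rfl fun j _ => ?_
    congr 1
    funext k
    simp [Pi.single_apply, eq_comm]
  calc φ z = φ (∑ j, z j • (Pi.single j 1 : Fin n → ℝ)) := by rw [← hz]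
    _ = ∑ j, z j * φ (Pi.single j 1) := by
        rw [map_sum]
        simp [smul_eq_mul]

lemma gradMap_injOn (hD : IsOpen D) (hDc : Convex ℝ D) (hu : ContDiffOn ℝ (⊤ : ℕ∞) u D)
    (hpos : ∀ x ∈ D, (hess u x).PosDef) : Set.InjOn (gradMap u) D := by
  intro y hy x hx hFeq
  by_contra hne
  set w : Fin n → ℝ := x - y with hw
  have hw0 : w ≠ 0 := sub_ne_zero.mpr (fun h => hne h.symm)
  set γ : ℝ → (Fin n → ℝ) := fun t => y + t • w with hγ
  have hγmem : ∀ t ∈ Set.Icc (0:ℝ) 1, γ t ∈ D := by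
    intro t ht
    have : (1 - t) • y + t • x ∈ D := hDc hy hx (by linarith [ht.2]) ht.1 (by ring)
    convert this using 1
    simp only [hγ, hw]
    module
  set h : ℝ → ℝ := fun t => ∑ i, w i * gradMap u (γ t) i with hh
  have hγ' : ∀ t : ℝ, HasDerivAt γ w t := by
    intro t
    simpa [hγ] using ((hasDerivAt_id t).smul_const w).const_add y
  have hder : ∀ t ∈ Set.Icc (0:ℝ) 1, HasDerivAt h (w ⬝ᵥ (hess u (γ t)) *ᵥ w) t := by
    intro t ht
    have hmem := hγmem t ht
    have hF : HasDerivAt (fun s => gradMap u (γ s)) (Hclm u (γ t) w) t :=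
      (hasFDerivAt_gradMap hD hu hmem (hpos _ hmem).1).comp_hasDerivAt t (hγ' t)
    have : HasDerivAt h (∑ i, w i * (Hclm u (γ t) w) i) t := by
      apply HasDerivAt.fun_sum
      intro i _
      exact ((hasDerivAt_pi.mp hF) i).const_mul (w i)
    convert this using 1
    rfl
  have hcont : ContinuousOn h (Set.Icc 0 1) := fun t ht =>
    ((hder t ht).continuousAt).continuousWithinAt
  have hmono : StrictMonoOn h (Set.Icc 0 1) := by
    apply strictMonoOn_of_deriv_pos (convex_Icc 0 1) hcont
    intro t ht
    rw [interior_Icc] at ht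
    rw [(hder t (Set.mem_Icc_of_Ioo ht)).deriv]
    have := (hpos _ (hγmem t (Set.mem_Icc_of_Ioo ht))).dotProduct_mulVec_pos hw0
    simpa using this
  have h01 : h 0 < h 1 := hmono (Set.left_mem_Icc.2 zero_le_one)
    (Set.right_mem_Icc.2 zero_le_one) zero_lt_one
  have hγ0 : γ 0 = y := by rw [hγ]; module
  have hγ1 : γ 1 = x := by rw [hγ, hw]; module
  have h01' : ∑ i, w i * gradMap u y i < ∑ i, w i * gradMap u x i := by
    simpa only [hh, hγ0, hγ1] using h01
  rw [hFeq] at h01'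
  exact lt_irrefl _ h01'

lemma differentiableAt_logdet (hD : IsOpen D) (hu : ContDiffOn ℝ (⊤ : ℕ∞) u D)
    (hpos : ∀ x ∈ D, (hess u x).PosDef) {x : Fin n → ℝ} (hx : x ∈ D) :
    DifferentiableAt ℝ (fun y => Real.log (hess u y).det) x := by
  have hdet : DifferentiableAt ℝ (fun y => (hess u y).det) x := by
    have heq : (fun y => (hess u y).det)
        = fun y => ∑ σ : Equiv.Perm (Fin n),
            ((Equiv.Perm.sign σ : ℤ) : ℝ) * ∏ i, pd (σ i) (pd i u) y := by
      funext y
      rw [Matrix.det_apply']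
      rfl
    rw [heq]
    apply DifferentiableAt.fun_sum
    intro σ _
    apply DifferentiableAt.const_mul
    exact (HasFDerivAt.finset_prod (fun i _ =>
      ((contDiffAt_pdpd hD hu hx (σ i) i).differentiableAt
        (by simp)).hasFDerivAt)).differentiableAt
  have hne : (hess u x).det ≠ 0 := ne_of_gt (hpos x hx).det_pos
  exact hdet.log hne

lemma exists_CLE {n : ℕ} (H : Matrix (Fin n) (Fin n) ℝ) (hdet : IsUnit H.det) :
    ∃ e : (Fin n → ℝ) ≃L[ℝ] (Fin n → ℝ),
      (e : (Fin n → ℝ) →L[ℝ] (Fin n → ℝ)) = LinearMap.toContinuousLinearMap H.mulVecLin ∧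
      ∀ w, e.symm w = H⁻¹ *ᵥ w := by
  have h1 : H.mulVecLin ∘ₗ H⁻¹.mulVecLin = LinearMap.id := by
    rw [← Matrix.mulVecLin_mul, Matrix.mul_nonsing_inv _ hdet, Matrix.mulVecLin_one]
  have h2 : H⁻¹.mulVecLin ∘ₗ H.mulVecLin = LinearMap.id := by
    rw [← Matrix.mulVecLin_mul, Matrix.nonsing_inv_mul _ hdet, Matrix.mulVecLin_one]
  set l : (Fin n → ℝ) ≃ₗ[ℝ] (Fin n → ℝ) := LinearEquiv.ofLinear H.mulVecLin H⁻¹.mulVecLin h1 h2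
    with hl
  set e := l.toContinuousLinearEquiv with he
  have happ : ∀ v, e v = H *ᵥ v := by
    intro v
    have h3 : e v = l v := congrFun (LinearEquiv.coe_toContinuousLinearEquiv' l) v
    rw [h3]
    rfl
  refine ⟨e, ?_, ?_⟩
  · ext v i
    simp only [ContinuousLinearEquiv.coe_coe]
    exact (congrFun (happ v) i).trans rfl
  · intro w
    apply e.injective
    rw [ContinuousLinearEquiv.apply_symm_apply, happ]
    rw [Matrix.mulVec_mulVec, Matrix.mul_nonsing_inv _ hdet, Matrix.one_mulVec]

end aux


/-- if the gradient image is convex and |v| ≤ K, then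
|L(x) - L(y)| ≤ K |∇u(x) - ∇u(y)|. -/
theorem stmt_7 {n : ℕ} (D : Set (Fin n → ℝ)) (hD : IsOpen D) (hDc : Convex ℝ D)
    (u : (Fin n → ℝ) → ℝ) (hu : ContDiffOn ℝ (⊤ : ℕ∞) u D)
    (hpos : ∀ x ∈ D, (hess u x).PosDef)
    (hgrad : Convex ℝ ((fun x => fun i => pd i u x) '' D))
    (K : ℝ) (hK : 0 ≤ K)
    (hv : ∀ x ∈ D,
      Real.sqrt (∑ i, (∑ j, (hess u x)⁻¹ i j *
        pd j (fun y => Real.log (hess u y).det) x) ^ 2) ≤ K) :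
    ∀ x ∈ D, ∀ y ∈ D,
      |Real.log (hess u x).det - Real.log (hess u y).det|
        ≤ K * Real.sqrt (∑ i, (pd i u x - pd i u y) ^ 2) := by
  intro x hx y hy
  classical
  set L : (Fin n → ℝ) → ℝ := fun y => Real.log (hess u y).det with hLdef
  set F : (Fin n → ℝ) → (Fin n → ℝ) := gradMap u with hFdef
  have hgrad' : Convex ℝ (F '' D) := hgrad
  have hginj : Set.InjOn F D := gradMap_injOn hD hDc hu hpos
  set w : Fin n → ℝ := F x - F y with hw
  set p : ℝ → (Fin n → ℝ) := fun t => F y + t • w with hp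
  have hp0 : p 0 = F y := by rw [hp]; module
  have hp1 : p 1 = F x := by rw [hp, hw]; module
  have himg : ∀ t ∈ Set.Icc (0:ℝ) 1, ∃ z ∈ D, F z = p t := by
    intro t ht
    have h1 : F x ∈ F '' D := Set.mem_image_of_mem F hx
    have h2 : F y ∈ F '' D := Set.mem_image_of_mem F hy
    have h3 : (1 - t) • F y + t • F x ∈ F '' D :=
      hgrad' h2 h1 (by linarith [ht.2]) ht.1 (by ring)
    have h4 : p t = (1 - t) • F y + t • F x := by rw [hp, hw]; module
    rw [h4]
    obtain ⟨z, hz, hz2⟩ := h3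
    exact ⟨z, hz, hz2⟩
  set xsel : ℝ → (Fin n → ℝ) :=
    fun t => if h : ∃ z ∈ D, F z = p t then h.choose else x with hxsel
  have hselD : ∀ t ∈ Set.Icc (0:ℝ) 1, xsel t ∈ D := by
    intro t ht
    rw [hxsel]
    simp only [dif_pos (himg t ht)]
    exact (himg t ht).choose_spec.1
  have hselF : ∀ t ∈ Set.Icc (0:ℝ) 1, F (xsel t) = p t := by
    intro t ht
    rw [hxsel]
    simp only [dif_pos (himg t ht)]
    exact (himg t ht).choose_spec.2
  set g : ℝ → ℝ := fun t => L (xsel t) with hg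
  set C : ℝ := K * Real.sqrt (∑ i, w i ^ 2) with hC
  set c : ℝ → ℝ :=
    fun t => ∑ k, (∑ j, (hess u (xsel t))⁻¹ k j * pd j L (xsel t)) * w k with hc
  have hp' : ∀ t : ℝ, HasDerivAt p w t := by
    intro t
    rw [hp]
    simpa using ((hasDerivAt_id t).smul_const w).const_add (F y)
  -- bound on c
  have hcb : ∀ t ∈ Set.Icc (0:ℝ) 1, ‖c t‖ ≤ C := by
    intro t ht
    have hzD := hselD t ht
    have hvz := hv _ hzD
    set v : Fin n → ℝ := fun k => ∑ j, (hess u (xsel t))⁻¹ k j * pd j L (xsel t) with hvdef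
    have h1 : |∑ k, v k * w k| ≤ Real.sqrt (∑ k, v k ^ 2) * Real.sqrt (∑ k, w k ^ 2) := by
      rw [← Real.sqrt_sq_eq_abs, ← Real.sqrt_mul (by positivity)]
      exact Real.sqrt_le_sqrt (Finset.sum_mul_sq_le_sq_mul_sq Finset.univ v w)
    have h2 : Real.sqrt (∑ k, v k ^ 2) ≤ K := hvz
    calc ‖c t‖ = |∑ k, v k * w k| := rfl
      _ ≤ Real.sqrt (∑ k, v k ^ 2) * Real.sqrt (∑ k, w k ^ 2) := h1
      _ ≤ K * Real.sqrt (∑ k, w k ^ 2) :=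
          mul_le_mul_of_nonneg_right h2 (Real.sqrt_nonneg _)
      _ = C := rfl
  -- derivative of g
  have hderiv : ∀ t ∈ Set.Icc (0:ℝ) 1, HasDerivWithinAt g (c t) (Set.Icc 0 1) t := by
    intro t ht
    have hzD : xsel t ∈ D := hselD t ht
    have hzF : F (xsel t) = p t := hselF t ht
    set z := xsel t with hzdef
    have hsym : (hess u z).IsHermitian := (hpos z hzD).1
    have hdetu : IsUnit (hess u z).det := isUnit_iff_ne_zero.mpr (hpos z hzD).det_pos.ne'
    obtain ⟨e, hecoe, hesymm⟩ := exists_CLE (hess u z) hdetu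
    have hstrict : HasStrictFDerivAt F (e : (Fin n → ℝ) →L[ℝ] (Fin n → ℝ)) z := by
      rw [hecoe]
      exact hasStrictFDerivAt_gradMap hD hu hzD hsym
    set f : (Fin n → ℝ) → (Fin n → ℝ) := hstrict.localInverse F e z with hfdef
    have hfz : f (F z) = z := hstrict.localInverse_apply_image
    have hfd : HasStrictFDerivAt f (e.symm : (Fin n → ℝ) →L[ℝ] (Fin n → ℝ)) (F z) :=
      hstrict.to_localInverse
    have hfcont : ContinuousAt f (F z) := hstrict.localInverse_continuousAt
    have hrinv : ∀ᶠ q in 𝓝 (F z), F (f q) = q := hstrict.eventually_right_inverse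
    rw [hzF] at hfz hfd hfcont hrinv
    have hLdiff : DifferentiableAt ℝ L z := differentiableAt_logdet hD hu hpos hzD
    have hinner : HasDerivAt (fun s => f (p s)) (e.symm w) t := by
      have h := hfd.hasFDerivAt.comp_hasDerivAt t (hp' t)
      exact h
    have houter : HasFDerivAt L (fderiv ℝ L z) (f (p t)) := by
      rw [hfz]
      exact hLdiff.hasFDerivAt
    have hcomp : HasDerivAt (fun s => L (f (p s))) (fderiv ℝ L z (e.symm w)) t := by
      have h := houter.comp_hasDerivAt t hinner
      exact h
    have hval : fderiv ℝ L z (e.symm w) = c t := by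
      rw [hesymm, clm_apply_eq_sum]
      have hsinv : ((hess u z)⁻¹).IsHermitian := hsym.inv
      calc ∑ j, ((hess u z)⁻¹ *ᵥ w) j * fderiv ℝ L z (Pi.single j 1)
          = ∑ j, (∑ k, (hess u z)⁻¹ j k * w k) * pd j L z := rfl
        _ = ∑ j, ∑ k, (hess u z)⁻¹ j k * w k * pd j L z := by
            simp [Finset.sum_mul]
        _ = ∑ k, ∑ j, (hess u z)⁻¹ j k * w k * pd j L z := Finset.sum_comm
        _ = ∑ k, (∑ j, (hess u z)⁻¹ k j * pd j L z) * w k := by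
            refine Finset.sum_congr rfl fun k _ => ?_
            rw [Finset.sum_mul]
            refine Finset.sum_congr rfl fun j _ => ?_
            have hjk : (hess u z)⁻¹ j k = (hess u z)⁻¹ k j := by
              have := hsinv.apply j k
              simpa using this.symm
            rw [hjk]
            ring
        _ = c t := rfl
    have hev1 : ∀ᶠ s in 𝓝 t, f (p s) ∈ D := by
      have h1 : ∀ᶠ q in 𝓝 (p t), f q ∈ D := by
        apply hfcont.eventually_mem
        rw [hfz]
        exact hD.mem_nhds hzD
      exact (hp' t).continuousAt.eventually h1
    have hev2 : ∀ᶠ s in 𝓝 t, F (f (p s)) = p s :=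
      (hp' t).continuousAt.eventually hrinv
    have heq : g =ᶠ[nhdsWithin t (Set.Icc (0:ℝ) 1)] fun s => L (f (p s)) := by
      filter_upwards [((hev1.and hev2).filter_mono nhdsWithin_le_nhds),
        eventually_mem_nhdsWithin] with s hs hsI
      have hsel : xsel s = f (p s) :=
        hginj (hselD s hsI) hs.1 (by rw [hselF s hsI, hs.2])
      simp only [hg]
      rw [hsel]
    have hgt : g t = L (f (p t)) := by
      simp only [hg]
      rw [hfz, ← hzdef]
    exact hval ▸ (hcomp.hasDerivWithinAt.congr_of_eventuallyEq heq hgt)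
  -- mean value inequality
  have hmvt := norm_image_sub_le_of_norm_deriv_le_segment' hderiv
    (fun s hs => hcb s (Set.mem_Icc_of_Ico hs)) 1 (Set.right_mem_Icc.2 zero_le_one)
  have hx1 : xsel 1 = x := by
    apply hginj (hselD 1 (Set.right_mem_Icc.2 zero_le_one)) hx
    rw [hselF 1 (Set.right_mem_Icc.2 zero_le_one), hp1]
  have hy0 : xsel 0 = y := by
    apply hginj (hselD 0 (Set.left_mem_Icc.2 zero_le_one)) hy
    rw [hselF 0 (Set.left_mem_Icc.2 zero_le_one), hp0]
  have hfin : |L x - L y| ≤ C * (1 - 0) := by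
    have h1 : g 1 = L x := by simp only [hg]; rw [hx1]
    have h0 : g 0 = L y := by simp only [hg]; rw [hy0]
    calc |L x - L y| = ‖g 1 - g 0‖ := by rw [h1, h0, Real.norm_eq_abs]
      _ ≤ C * (1 - 0) := hmvt
  calc |Real.log (hess u x).det - Real.log (hess u y).det|
      = |L x - L y| := rfl
    _ ≤ C * (1 - 0) := hfin
    _ = C := by ring
    _ = K * Real.sqrt (∑ i, (pd i u x - pd i u y) ^ 2) := rfl
end

section
/- Fix α ∈ (0,1) and b > 0 with (2−b)/(2+b) > α (equivalently (1−α)(1−b/2) ≥ αb) and b < 2. Then the function r(x, y) = y^α·((b/2)|x|² − 1) is convex and negative on the cylinder Z = {(x,y) ∈ ℝ^{n−1} × ℝ : |x| ≤ 1, 0 < y < 1}. -/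
/-!
Write `-r(x, y) = y ^ α * w(x) ^ (1 - α)` with `w(x) = ψ(|x|)` and
`ψ(t) = (1 - (b/2) t²) ^ (1/(1-α))`. The weighted geometric mean `(u, v) ↦ u ^ α * v ^ (1 - α)`
is superadditive (Hölder) and monotone, so it preserves concavity; hence `-r` is concave as soon
as `w` is. As `ψ` is decreasing on `[0, 1]` and the norm is convex, `w` is concave once `ψ` is,
and `ψ'' ≤ 0` on `[0, 1]` amounts to `(b/2)(1 + α) ≤ 1 - α`, i.e. `α ≤ (2 - b)/(2 + b)`.
-/

open Set Real

lemma rpow_mul_rpow_one_sub_add_le {α y₁ y₂ w₁ w₂ : ℝ} (hα0 : 0 < α) (hα1 : α < 1)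
    (hy₁ : 0 ≤ y₁) (hy₂ : 0 ≤ y₂) (hw₁ : 0 ≤ w₁) (hw₂ : 0 ≤ w₂) :
    y₁ ^ α * w₁ ^ (1 - α) + y₂ ^ α * w₂ ^ (1 - α) ≤ (y₁ + y₂) ^ α * (w₁ + w₂) ^ (1 - α) := by
  have hβ : 1 - α ≠ 0 := by linarith
  have := inner_le_Lp_mul_Lq_of_nonneg Finset.univ (Real.HolderConjugate.inv_one_sub_inv hα0 hα1)
    (f := ![y₁ ^ α, y₂ ^ α]) (g := ![w₁ ^ (1 - α), w₂ ^ (1 - α)])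
    (by simp [Fin.forall_fin_two, rpow_nonneg, *]) (by simp [Fin.forall_fin_two, rpow_nonneg, *])
  simpa [Fin.sum_univ_two, rpow_rpow_inv, hα0.ne', hβ, *] using this

lemma mul_rpow_mul_mul_rpow_one_sub {α a y w : ℝ} (ha : 0 ≤ a) (hy : 0 ≤ y) (hw : 0 ≤ w) :
    (a * y) ^ α * (a * w) ^ (1 - α) = a * (y ^ α * w ^ (1 - α)) := by
  rw [mul_rpow ha hy, mul_rpow ha hw, mul_mul_mul_comm, ← rpow_add' ha (by norm_num),
    add_sub_cancel, rpow_one]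

lemma ConcaveOn.rpow_mul_rpow {E : Type*} [AddCommGroup E] [Module ℝ E] {s : Set E} {u v : E → ℝ}
    {α : ℝ} (hα0 : 0 < α) (hα1 : α < 1) (hu : ConcaveOn ℝ s u) (hv : ConcaveOn ℝ s v)
    (hu0 : ∀ x ∈ s, 0 ≤ u x) (hv0 : ∀ x ∈ s, 0 ≤ v x) :
    ConcaveOn ℝ s (fun x => u x ^ α * v x ^ (1 - α)) := by
  refine ⟨hu.1, fun x hx y hy a b ha hb hab => ?_⟩
  have hux := hu0 x hx; have huy := hu0 y hy; have hvx := hv0 x hx; have hvy := hv0 y hy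
  calc a • (u x ^ α * v x ^ (1 - α)) + b • (u y ^ α * v y ^ (1 - α))
      = (a * u x) ^ α * (a * v x) ^ (1 - α) + (b * u y) ^ α * (b * v y) ^ (1 - α) := by
        rw [mul_rpow_mul_mul_rpow_one_sub ha hux hvx,
          mul_rpow_mul_mul_rpow_one_sub hb huy hvy, smul_eq_mul, smul_eq_mul]
    _ ≤ (a * u x + b * u y) ^ α * (a * v x + b * v y) ^ (1 - α) :=
        rpow_mul_rpow_one_sub_add_le hα0 hα1 (by positivity) (by positivity) (by positivity)
          (by positivity)
    _ ≤ u (a • x + b • y) ^ α * v (a • x + b • y) ^ (1 - α) := by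
        gcongr
        · exact rpow_nonneg (hu0 _ (hu.1 hx hy ha hb hab)) _
        · exact hu.2 hx hy ha hb hab
        · exact hv.2 hx hy ha hb hab

lemma concaveOn_one_sub_mul_sq_rpow {c p : ℝ} (hc : 0 ≤ c) (hp : 1 ≤ p)
    (hcp : c * (2 * p - 1) ≤ 1) :
    ConcaveOn ℝ (Icc 0 1) (fun r : ℝ => (1 - c * r ^ 2) ^ p) := by
  have hc1 : c ≤ 1 := by nlinarith
  have hpos : ∀ r ∈ interior (Icc (0 : ℝ) 1), 0 < 1 - c * r ^ 2 := by
    rw [interior_Icc]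
    rintro r ⟨hr0, hr1⟩
    nlinarith [mul_lt_mul_of_pos_left (pow_lt_one₀ hr0.le hr1 two_ne_zero) hr0]
  have hq (r : ℝ) : HasDerivAt (fun r : ℝ => 1 - c * r ^ 2) (-(2 * c * r)) r :=
    (((hasDerivAt_pow 2 r).const_mul c).const_sub 1).congr_deriv (by push_cast; ring)
  refine concaveOn_of_hasDerivWithinAt2_nonpos (convex_Icc 0 1)
    (f' := fun r => -(2 * c * p) * (r * (1 - c * r ^ 2) ^ (p - 1)))
    (f'' := fun r => -(2 * c * p) * ((1 - c * r ^ 2) ^ (p - 2) * (1 - c * (2 * p - 1) * r ^ 2)))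
    ?_ (fun r hr => ?_) (fun r hr => ?_) (fun r hr => ?_)
  · exact (continuous_const.sub (continuous_const.mul (continuous_pow 2))).continuousOn.rpow_const
      fun _ _ => Or.inr (by linarith)
  · exact (((hq r).rpow_const (Or.inl (hpos r hr).ne')).congr_deriv (by ring)).hasDerivWithinAt
  · have e : (1 - c * r ^ 2) ^ (p - 1) = (1 - c * r ^ 2) ^ (p - 2) * (1 - c * r ^ 2) := by
      rw [← rpow_add_one (hpos r hr).ne']; ring_nf
    have hd := ((hasDerivAt_id' r).mul
      ((hq r).rpow_const (p := p - 1) (Or.inl (hpos r hr).ne'))).const_mul (-(2 * c * p))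
    refine (hd.congr_deriv ?_).hasDerivWithinAt
    rw [sub_sub, one_add_one_eq_two, e]
    ring
  · have hr1 : r ^ 2 ≤ 1 := by
      rw [interior_Icc] at hr; exact pow_le_one₀ hr.1.le hr.2.le
    rw [neg_mul]
    exact neg_nonpos.2 <| mul_nonneg (by positivity) <|
      mul_nonneg (rpow_nonneg (hpos r hr).le _) (by nlinarith)

lemma antitoneOn_one_sub_mul_sq_rpow {c p : ℝ} (hc : 0 ≤ c) (hc1 : c ≤ 1) (hp : 0 ≤ p) :
    AntitoneOn (fun r : ℝ => (1 - c * r ^ 2) ^ p) (Icc 0 1) := by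
  rintro r ⟨hr0, hr1⟩ s ⟨hs0, hs1⟩ hrs
  have : r ^ 2 ≤ s ^ 2 := by gcongr
  have : s ^ 2 ≤ 1 := pow_le_one₀ hs0 hs1
  dsimp only
  gcongr
  · nlinarith

lemma ConcaveOn.comp_convexOn_of_antitoneOn {E : Type*} [AddCommGroup E] [Module ℝ E]
    {s : Set E} {t : Set ℝ} {g : ℝ → ℝ} {φ : E → ℝ} (hg : ConcaveOn ℝ t g)
    (hg' : AntitoneOn g t) (hφ : ConvexOn ℝ s φ) (hφt : MapsTo φ s t) :
    ConcaveOn ℝ s (g ∘ φ) := by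
  refine ⟨hφ.1, fun x hx y hy a b ha hb hab => ?_⟩
  calc a • g (φ x) + b • g (φ y) ≤ g (a • φ x + b • φ y) := hg.2 (hφt hx) (hφt hy) ha hb hab
    _ ≤ g (φ (a • x + b • y)) :=
      hg' (hφt (hφ.1 hx hy ha hb hab)) (hg.1 (hφt hx) (hφt hy) ha hb hab) (hφ.2 hx hy ha hb hab)

theorem concaveOn_rpow_mul_one_sub_mul_norm_sq {E : Type*} [NormedAddCommGroup E]
    [NormedSpace ℝ E] {α c : ℝ} (hα0 : 0 < α) (hα1 : α < 1) (hc : 0 ≤ c)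
    (hcα : c * (1 + α) ≤ 1 - α) :
    ConcaveOn ℝ (Metric.closedBall (0 : E) 1 ×ˢ Ioi 0)
      (fun z : E × ℝ => z.2 ^ α * (1 - c * ‖z.1‖ ^ 2)) := by
  set S := Metric.closedBall (0 : E) 1 ×ˢ Ioi (0 : ℝ)
  have hS : Convex ℝ S := (convex_closedBall 0 1).prod (convex_Ioi 0)
  have hβ : 0 < 1 - α := by linarith
  have hp : 1 ≤ (1 - α)⁻¹ := one_le_inv₀ hβ |>.2 (by linarith)
  have hcp : c * (2 * (1 - α)⁻¹ - 1) ≤ 1 := by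
    rw [show 2 * (1 - α)⁻¹ - 1 = (1 + α) / (1 - α) by field_simp; ring, mul_div_assoc',
      div_le_one hβ]
    exact hcα
  have hc1 : c ≤ 1 := by nlinarith
  have hbase : ∀ z ∈ S, 0 ≤ 1 - c * ‖z.1‖ ^ 2 := fun z hz => by
    have : ‖z.1‖ ^ 2 ≤ 1 := pow_le_one₀ (norm_nonneg _) (mem_closedBall_zero_iff.1 hz.1)
    nlinarith
  have hnorm : ConvexOn ℝ S (fun z : E × ℝ => ‖z.1‖) :=
    ((convexOn_norm convex_univ).comp_linearMap (LinearMap.fst ℝ E ℝ)).subset (subset_univ _) hS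
  have hw : ConcaveOn ℝ S (fun z : E × ℝ => (1 - c * ‖z.1‖ ^ 2) ^ (1 - α)⁻¹) :=
    (concaveOn_one_sub_mul_sq_rpow hc hp hcp).comp_convexOn_of_antitoneOn
      (antitoneOn_one_sub_mul_sq_rpow hc hc1 (by linarith)) hnorm
      fun z hz => ⟨norm_nonneg _, mem_closedBall_zero_iff.1 hz.1⟩
  refine (((LinearMap.snd ℝ E ℝ).concaveOn hS).rpow_mul_rpow hα0 hα1 hw
    (fun z hz => le_of_lt hz.2) (fun z hz => rpow_nonneg (hbase z hz) _)).congr fun z hz => ?_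
  simp only [LinearMap.snd_apply, rpow_inv_rpow (hbase z hz) hβ.ne']

theorem stmt_11_general {m : ℕ} (α b : ℝ) (hα0 : 0 < α) (hα1 : α < 1)
    (hb0 : 0 < b) (hαb : (2 - b) / (2 + b) > α) :
    ConvexOn ℝ
      {p : (Fin m → ℝ) × ℝ | (∑ i, (p.1 i) ^ 2) ≤ 1 ∧ 0 < p.2 ∧ p.2 < 1}
      (fun p => p.2 ^ α * ((b / 2) * ∑ i, (p.1 i) ^ 2 - 1)) ∧
    ∀ p ∈ {p : (Fin m → ℝ) × ℝ | (∑ i, (p.1 i) ^ 2) ≤ 1 ∧ 0 < p.2 ∧ p.2 < 1},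
      p.2 ^ α * ((b / 2) * ∑ i, (p.1 i) ^ 2 - 1) < 0 := by
  have hcα : b / 2 * (1 + α) ≤ 1 - α := by
    have := (lt_div_iff₀ (by linarith : (0 : ℝ) < 2 + b)).1 hαb
    linarith
  let L : (Fin m → ℝ) × ℝ →ₗ[ℝ] EuclideanSpace ℝ (Fin m) × ℝ :=
    (WithLp.linearEquiv 2 ℝ (Fin m → ℝ)).symm.toLinearMap.prodMap LinearMap.id
  have hL (p : (Fin m → ℝ) × ℝ) : ‖(L p).1‖ ^ 2 = ∑ i, (p.1 i) ^ 2 :=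
    EuclideanSpace.real_norm_sq_eq _
  have hZ : {p : (Fin m → ℝ) × ℝ | (∑ i, (p.1 i) ^ 2) ≤ 1 ∧ 0 < p.2 ∧ p.2 < 1}
      = L ⁻¹' (Metric.closedBall 0 1 ×ˢ Ioo 0 1) := by
    ext p
    simp only [mem_ofPred_eq, mem_preimage, mem_prod, mem_closedBall_zero_iff, mem_Ioo, ← hL,
      sq_le_one_iff₀ (norm_nonneg _)]
    rfl
  have hconc := ((concaveOn_rpow_mul_one_sub_mul_norm_sq hα0 hα1 (by positivity) hcα).subset
    (prod_mono subset_rfl Ioo_subset_Ioi_self)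
    ((convex_closedBall 0 1).prod (convex_Ioo 0 1))).comp_linearMap L
  rw [← hZ] at hconc
  refine ⟨hconc.neg.congr fun p _ => ?_, fun p ⟨hp1, hp2, _⟩ => ?_⟩
  · have hL2 : (L p).2 = p.2 := rfl
    simp only [Pi.neg_apply, Function.comp_apply, hL, hL2]
    ring
  · exact mul_neg_of_pos_of_neg (rpow_pos_of_pos hp2 α) (by nlinarith)

/-- r(x,y) = y^α((b/2)|x|² - 1) is convex and negative on the
cylinder Z = {|x| ≤ 1, 0 < y < 1}. -/
theorem stmt_11 {m : ℕ} (α b : ℝ) (hα0 : 0 < α) (hα1 : α < 1)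
    (hb0 : 0 < b) (hb2 : b < 2) (hαb : (2 - b) / (2 + b) > α) :
    ConvexOn ℝ
      {p : (Fin m → ℝ) × ℝ | (∑ i, (p.1 i) ^ 2) ≤ 1 ∧ 0 < p.2 ∧ p.2 < 1}
      (fun p => p.2 ^ α * ((b / 2) * ∑ i, (p.1 i) ^ 2 - 1)) ∧
    ∀ p ∈ {p : (Fin m → ℝ) × ℝ | (∑ i, (p.1 i) ^ 2) ≤ 1 ∧ 0 < p.2 ∧ p.2 < 1},
      p.2 ^ α * ((b / 2) * ∑ i, (p.1 i) ^ 2 - 1) < 0 :=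
  stmt_11_general α b hα0 hα1 hb0 hαb
end

section
/- Fix α ∈ (0,1) and b ∈ (0,2) with (2−b)/(2+b) > α. For the function r(x,y) = y^α((b/2)|x|² − 1) on the cylinder Z = {|x| ≤ 1, 0 < y < 1} ⊆ ℝⁿ, there exists a constant C > 0 such that det(Hess r) ≥ C·(−r)^{n−1} throughout Z. -/
/-!
Where `y > 0` the Hessian of `r` is an arrowhead matrix: `b y^α` times the identity on the
horizontal block, bordered by the mixed partials `α b y^(α-1) xᵢ`. Taking the Schur complement of
the horizontal block gives
`det (Hess r) = (b y^α)^m · α y^(α-2) ((1 - α)(1 - (b/2)|x|²) - α b |x|²)`.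
The last factor is affine and decreasing in `|x|² ∈ [0, 1]`, so it is at least
`(1 - α)(1 - b/2) - α b`, which is positive exactly when `(2 - b)/(2 + b) > α`. Since `y^(α-2) ≥ 1`
and `0 ≤ 1 - (b/2)|x|² ≤ 1`, the bound holds with `C = α ((1 - α)(1 - b/2) - α b) b^m`.
-/

open Matrix BigOperators

open Filter Topology

theorem det_fromBlocks_smul_one₁₁ {K m n : Type*} [Field K] [Fintype m] [Fintype n]
    [DecidableEq m] [DecidableEq n] {d : K} (hd : d ≠ 0) (B : Matrix m n K) (C : Matrix n m K)
    (D : Matrix n n K) :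
    (fromBlocks (d • 1) B C D).det = d ^ Fintype.card m * (D - d⁻¹ • (C * B)).det := by
  let : Invertible (d • (1 : Matrix m m K)) := ⟨d⁻¹ • 1, by simp [hd], by simp [hd]⟩
  rw [det_fromBlocks₁₁, det_smul, det_one, mul_one]
  change d ^ _ * (D - C * (d⁻¹ • (1 : Matrix m m K)) * B).det = _
  simp

section PartialDerivative

variable {n : ℕ} {f g : (Fin n → ℝ) → ℝ} {x : Fin n → ℝ}

theorem HasFDerivAt.pd_eq {f' : (Fin n → ℝ) →L[ℝ] ℝ} (h : HasFDerivAt f f' x) (i : Fin n) :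
    pd i f x = f' (Pi.single i 1) := by
  rw [pd, h.fderiv]

theorem Filter.EventuallyEq.pd_eq (h : f =ᶠ[𝓝 x] g) (i : Fin n) : pd i f x = pd i g x := by
  simp only [pd, h.fderiv_eq]

theorem pd_const_mul_apply (a : ℝ) (i k : Fin n) :
    pd i (fun y => a * y k) x = if i = k then a else 0 := by
  rw [((hasFDerivAt_apply k x).const_mul a).pd_eq]
  simp [Pi.single_apply, eq_comm]

end PartialDerivative

section LastCoordinate

variable {m : ℕ} {x : Fin (m + 1) → ℝ}

theorem pd_rpow_last_mul {g : (Fin (m + 1) → ℝ) → ℝ} {β : ℝ} (hx : x (Fin.last m) ≠ 0)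
    (hg : DifferentiableAt ℝ g x) (i : Fin (m + 1)) :
    pd i (fun y => y (Fin.last m) ^ β * g y) x =
      x (Fin.last m) ^ β * pd i g x +
        if i = Fin.last m then β * x (Fin.last m) ^ (β - 1) * g x else 0 := by
  have hpow := (hasFDerivAt_apply (Fin.last m) x).rpow_const (p := β) (Or.inl hx)
  rw [pd, fderiv_fun_mul hpow.differentiableAt hg, hpow.fderiv]
  simp [pd, Pi.single_apply, eq_comm]
  split_ifs <;> ring

theorem hasFDerivAt_mul_sum_sq_sub (a e : ℝ) (x : Fin (m + 1) → ℝ) :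
    HasFDerivAt (fun y => a * ∑ i : Fin m, y i.castSucc ^ 2 - e)
      (a • ∑ i : Fin m, (2 * x i.castSucc) •
        (ContinuousLinearMap.proj i.castSucc : (Fin (m + 1) → ℝ) →L[ℝ] ℝ)) x := by
  have hsq (i : Fin m) : HasFDerivAt (fun y : Fin (m + 1) → ℝ => y i.castSucc ^ 2)
      ((2 * x i.castSucc) •
        (ContinuousLinearMap.proj i.castSucc : (Fin (m + 1) → ℝ) →L[ℝ] ℝ)) x := by
    simpa using (hasFDerivAt_apply (𝕜 := ℝ) i.castSucc x).pow 2
  exact ((HasFDerivAt.fun_sum fun i _ => hsq i).const_mul a).sub_const e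

theorem pd_castSucc_mul_sum_sq_sub (a e : ℝ) (k : Fin m) :
    pd k.castSucc (fun y => a * ∑ i : Fin m, y i.castSucc ^ 2 - e) x = 2 * a * x k.castSucc := by
  rw [(hasFDerivAt_mul_sum_sq_sub a e x).pd_eq]
  simp [Pi.single_apply]
  ring

theorem pd_last_mul_sum_sq_sub (a e : ℝ) :
    pd (Fin.last m) (fun y => a * ∑ i : Fin m, y i.castSucc ^ 2 - e) x = 0 := by
  rw [(hasFDerivAt_mul_sum_sq_sub a e x).pd_eq]
  simp

theorem eventually_ne_last (hx : x (Fin.last m) ≠ 0) : ∀ᶠ z in 𝓝 x, z (Fin.last m) ≠ 0 :=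
  (continuous_apply (Fin.last m)).continuousAt.eventually_ne hx

end LastCoordinate

noncomputable def rFn {m : ℕ} (α b : ℝ) : (Fin (m + 1) → ℝ) → ℝ := fun y =>
  y (Fin.last m) ^ α * (b / 2 * ∑ i : Fin m, y i.castSucc ^ 2 - 1)

section Hessian

variable {m : ℕ} (α b : ℝ) {x : Fin (m + 1) → ℝ}

theorem pd_castSucc_rFn (hx : x (Fin.last m) ≠ 0) (k : Fin m) :
    pd k.castSucc (rFn α b) x = x (Fin.last m) ^ α * (b * x k.castSucc) := by
  unfold rFn
  rw [pd_rpow_last_mul hx (hasFDerivAt_mul_sum_sq_sub _ _ x).differentiableAt,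
    pd_castSucc_mul_sum_sq_sub, if_neg (Fin.castSucc_ne_last k)]
  ring

theorem pd_last_rFn (hx : x (Fin.last m) ≠ 0) :
    pd (Fin.last m) (rFn α b) x =
      x (Fin.last m) ^ (α - 1) * (α * (b / 2) * ∑ i : Fin m, x i.castSucc ^ 2 - α) := by
  unfold rFn
  rw [pd_rpow_last_mul hx (hasFDerivAt_mul_sum_sq_sub _ _ x).differentiableAt,
    pd_last_mul_sum_sq_sub, if_pos rfl]
  ring

theorem hess_rFn_castSucc_castSucc (hx : x (Fin.last m) ≠ 0) (i j : Fin m) :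
    hess (rFn α b) x i.castSucc j.castSucc = if i = j then b * x (Fin.last m) ^ α else 0 := by
  have h : pd j.castSucc (rFn α b) =ᶠ[𝓝 x] fun z => z (Fin.last m) ^ α * (b * z j.castSucc) :=
    (eventually_ne_last hx).mono fun z hz => pd_castSucc_rFn α b hz j
  rw [hess, of_apply, h.pd_eq, pd_rpow_last_mul hx (by fun_prop), pd_const_mul_apply,
    if_neg (Fin.castSucc_ne_last i)]
  simp [Fin.castSucc_inj, mul_comm]

theorem hess_rFn_castSucc_last (hx : x (Fin.last m) ≠ 0) (i : Fin m) :
    hess (rFn α b) x i.castSucc (Fin.last m) =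
      α * b * x (Fin.last m) ^ (α - 1) * x i.castSucc := by
  have h : pd (Fin.last m) (rFn α b) =ᶠ[𝓝 x]
      fun z => z (Fin.last m) ^ (α - 1) * (α * (b / 2) * ∑ i : Fin m, z i.castSucc ^ 2 - α) :=
    (eventually_ne_last hx).mono fun z hz => pd_last_rFn α b hz
  rw [hess, of_apply, h.pd_eq,
    pd_rpow_last_mul hx (hasFDerivAt_mul_sum_sq_sub _ _ x).differentiableAt,
    pd_castSucc_mul_sum_sq_sub, if_neg (Fin.castSucc_ne_last i)]
  ring

theorem hess_rFn_last_castSucc (hx : x (Fin.last m) ≠ 0) (j : Fin m) :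
    hess (rFn α b) x (Fin.last m) j.castSucc =
      α * b * x (Fin.last m) ^ (α - 1) * x j.castSucc := by
  have h : pd j.castSucc (rFn α b) =ᶠ[𝓝 x] fun z => z (Fin.last m) ^ α * (b * z j.castSucc) :=
    (eventually_ne_last hx).mono fun z hz => pd_castSucc_rFn α b hz j
  rw [hess, of_apply, h.pd_eq, pd_rpow_last_mul hx (by fun_prop), pd_const_mul_apply,
    if_neg (Fin.castSucc_ne_last j).symm, if_pos rfl]
  ring

theorem hess_rFn_last_last (hx : x (Fin.last m) ≠ 0) :
    hess (rFn α b) x (Fin.last m) (Fin.last m) =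
      α * (α - 1) * x (Fin.last m) ^ (α - 2) * (b / 2 * ∑ i : Fin m, x i.castSucc ^ 2 - 1) := by
  have h : pd (Fin.last m) (rFn α b) =ᶠ[𝓝 x]
      fun z => z (Fin.last m) ^ (α - 1) * (α * (b / 2) * ∑ i : Fin m, z i.castSucc ^ 2 - α) :=
    (eventually_ne_last hx).mono fun z hz => pd_last_rFn α b hz
  rw [hess, of_apply, h.pd_eq,
    pd_rpow_last_mul hx (hasFDerivAt_mul_sum_sq_sub _ _ x).differentiableAt,
    pd_last_mul_sum_sq_sub, if_pos rfl, sub_sub, one_add_one_eq_two]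
  ring

theorem hess_rFn_submatrix (hx : x (Fin.last m) ≠ 0) :
    (hess (rFn α b) x).submatrix finSumFinEquiv finSumFinEquiv =
      fromBlocks ((b * x (Fin.last m) ^ α) • 1)
        (of fun i _ => α * b * x (Fin.last m) ^ (α - 1) * x i.castSucc)
        (of fun _ j => α * b * x (Fin.last m) ^ (α - 1) * x j.castSucc)
        (of fun _ _ => α * (α - 1) * x (Fin.last m) ^ (α - 2) *
          (b / 2 * ∑ i : Fin m, x i.castSucc ^ 2 - 1)) := by
  ext (i | i) (j | j)
  · simp only [submatrix_apply, fromBlocks_apply₁₁, Matrix.smul_apply, one_apply, smul_eq_mul,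
      mul_ite, mul_one, mul_zero]
    exact hess_rFn_castSucc_castSucc α b hx i j
  · fin_cases j; exact hess_rFn_castSucc_last α b hx i
  · fin_cases i; exact hess_rFn_last_castSucc α b hx j
  · fin_cases i; fin_cases j; exact hess_rFn_last_last α b hx

theorem det_hess_rFn (hb : b ≠ 0) (hx : 0 < x (Fin.last m)) :
    (hess (rFn α b) x).det = (b * x (Fin.last m) ^ α) ^ m * (α * x (Fin.last m) ^ (α - 2) *
      ((1 - α) * (1 - b / 2 * ∑ i : Fin m, x i.castSucc ^ 2) -
        α * b * ∑ i : Fin m, x i.castSucc ^ 2)) := by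
  rw [← det_submatrix_equiv_self finSumFinEquiv, hess_rFn_submatrix α b hx.ne',
    det_fromBlocks_smul_one₁₁ (by positivity), det_unique, Fintype.card_fin]
  congr 1
  set y := x (Fin.last m)
  set S := ∑ i : Fin m, x i.castSucc ^ 2
  have hsum : ∑ j : Fin m, α * b * y ^ (α - 1) * x j.castSucc *
      (α * b * y ^ (α - 1) * x j.castSucc) = (α * b * y ^ (α - 1)) ^ 2 * S := by
    rw [Finset.mul_sum]
    exact Finset.sum_congr rfl fun _ _ => by ring
  have h1 : y ^ (α - 1) = y ^ α / y := Real.rpow_sub_one hx.ne' α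
  have h2 : y ^ (α - 2) = y ^ α / y ^ 2 := by rw [Real.rpow_sub hx, Real.rpow_two]
  simp only [Matrix.sub_apply, Matrix.smul_apply, mul_apply, of_apply, smul_eq_mul, hsum]
  rw [h1, h2]
  field_simp
  ring

end Hessian

theorem mul_pow_le_det_hess_rFn {m : ℕ} {α b y S : ℝ} (hα0 : 0 ≤ α) (hα2 : α ≤ 2) (hb0 : 0 ≤ b)
    (hb2 : b ≤ 2) (hκ : 0 ≤ (1 - α) * (1 - b / 2) - α * b) (hy0 : 0 < y) (hy1 : y ≤ 1)
    (hS0 : 0 ≤ S) (hS1 : S ≤ 1) :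
    α * ((1 - α) * (1 - b / 2) - α * b) * b ^ m * (-(y ^ α * (b / 2 * S - 1))) ^ m ≤
      (b * y ^ α) ^ m * (α * y ^ (α - 2) * ((1 - α) * (1 - b / 2 * S) - α * b * S)) := by
  have hq0 : 0 ≤ 1 - b / 2 * S := by nlinarith
  have hq1 : 1 - b / 2 * S ≤ 1 := by nlinarith
  have hK : (1 - α) * (1 - b / 2) - α * b ≤ (1 - α) * (1 - b / 2 * S) - α * b * S := by
    nlinarith [mul_nonneg (sub_nonneg.2 hS1) (mul_nonneg hb0 (by linarith : 0 ≤ 1 + α))]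
  have hy2 : 1 ≤ y ^ (α - 2) := Real.one_le_rpow_of_pos_of_le_one_of_nonpos hy0 hy1 (by linarith)
  calc α * ((1 - α) * (1 - b / 2) - α * b) * b ^ m * (-(y ^ α * (b / 2 * S - 1))) ^ m
      = (b * y ^ α) ^ m * (α * ((1 - α) * (1 - b / 2) - α * b)) * (1 - b / 2 * S) ^ m := by
        rw [mul_pow, show -(y ^ α * (b / 2 * S - 1)) = y ^ α * (1 - b / 2 * S) by ring, mul_pow]
        ring
    _ ≤ (b * y ^ α) ^ m * (α * ((1 - α) * (1 - b / 2) - α * b)) * 1 := by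
        gcongr
        exact pow_le_one₀ hq0 hq1
    _ ≤ (b * y ^ α) ^ m * (α * y ^ (α - 2) * ((1 - α) * (1 - b / 2 * S) - α * b * S)) := by
        rw [mul_one, mul_assoc α]
        gcongr
        calc (1 - α) * (1 - b / 2) - α * b
            ≤ (1 - α) * (1 - b / 2 * S) - α * b * S := hK
          _ ≤ y ^ (α - 2) * ((1 - α) * (1 - b / 2 * S) - α * b * S) :=
            le_mul_of_one_le_left (hκ.trans hK) hy2

/-- for r(x,y) = y^α((b/2)|x|²-1) on the cylinder Z there is C > 0
with det(Hess r) ≥ C(-r)^{n-1} on Z. Here the last coordinate plays the role of y. -/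
theorem stmt_12 {m : ℕ} (α b : ℝ) (hα0 : 0 < α) (hα1 : α < 1)
    (hb0 : 0 < b) (hb2 : b < 2) (hαb : (2 - b) / (2 + b) > α) :
    ∃ C > (0 : ℝ), ∀ x : Fin (m + 1) → ℝ,
      (∑ i : Fin m, (x i.castSucc) ^ 2) ≤ 1 →
      0 < x (Fin.last m) → x (Fin.last m) < 1 →
      (hess (fun y => (y (Fin.last m)) ^ α *
          ((b / 2) * ∑ i : Fin m, (y i.castSucc) ^ 2 - 1)) x).det
        ≥ C * (-( (x (Fin.last m)) ^ α *
          ((b / 2) * ∑ i : Fin m, (x i.castSucc) ^ 2 - 1))) ^ m := by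
  have hκ : 0 < (1 - α) * (1 - b / 2) - α * b := by
    rw [gt_iff_lt, lt_div_iff₀ (by linarith)] at hαb
    linarith
  refine ⟨α * ((1 - α) * (1 - b / 2) - α * b) * b ^ m, by positivity, fun x hS1 hy0 hy1 => ?_⟩
  rw [ge_iff_le, show (fun y : Fin (m + 1) → ℝ => y (Fin.last m) ^ α *
    (b / 2 * ∑ i : Fin m, y i.castSucc ^ 2 - 1)) = rFn α b from rfl, det_hess_rFn α b hb0.ne' hy0]
  exact mul_pow_le_det_hess_rFn hα0.le (by linarith) hb0.le hb2.le hκ.le hy0 hy1.le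
    (by positivity) hS1
end
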